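/- arXiv:2211.07058 — 5 statements merged into one kernel-verified Lean document; each statement's English description precedes it below -/
import Mathlib

section
/- Covering by approximate groups: let G be an abelian group, A ⊆ G a finite nonempty set, and K ≥ 1 a real number with |A + A| ≤ K|A|. Then there exist finite sets H, X ⊆ G and an element a₀ ∈ A such that (i) |H| ≤ K²|A|, (ii) H = −H and H + H ⊆ H + X with |X| ≤ K⁵ (so H is a K⁵-approximate group), and (iii) A − a₀ ⊆ H. -/
open scoped Pointwise

open Finset in
private lemma cover_aux {G : Type*} [AddCommGroup G] [DecidableEq G] (A : Finset G) :
    (A - A) + (A - A) + A = 3 • A - 2 • A := by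
  have h3 : (3 : ℕ) • A = A + A + A := by
    rw [succ_nsmul, succ_nsmul, one_nsmul]
  have h2 : (2 : ℕ) • A = A + A := by rw [succ_nsmul, one_nsmul]
  rw [h3, h2, sub_eq_add_neg, sub_eq_add_neg, neg_add]
  ac_rfl

open Finset in
private lemma pr_bound {G : Type*} [AddCommGroup G] [DecidableEq G]
    (A : Finset G) (hA : A.Nonempty) (K : ℝ) (hK : 1 ≤ K)
    (hdoub : ((A + A).card : ℝ) ≤ K * (A.card : ℝ)) (m n : ℕ) :
    ((m • A - n • A).card : ℝ) ≤ K ^ (m + n) * (A.card : ℝ) := by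
  have hApos : (0 : ℝ) < (A.card : ℝ) := by
    exact_mod_cast Nat.cast_pos.mpr hA.card_pos
  have h := Finset.pluennecke_ruzsa_inequality_nsmul_sub_nsmul_add hA A m n
  have h2 : (((m • A - n • A).card : ℚ≥0) : ℝ) ≤
      (((((A + A).card : ℚ≥0) / (A.card : ℚ≥0)) ^ (m + n) * ((A.card : ℚ≥0)) : ℚ≥0) : ℝ) :=
    NNRat.cast_le.2 h
  push_cast at h2
  have h' : ((m • A - n • A).card : ℝ) ≤
      (((A + A).card : ℝ) / (A.card : ℝ)) ^ (m + n) * (A.card : ℝ) := h2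
  refine h'.trans ?_
  have hdiv : ((A + A).card : ℝ) / (A.card : ℝ) ≤ K := by
    rw [div_le_iff₀ hApos]; exact hdoub
  gcongr

/-- Covering by approximate groups (a consequence of Ruzsa's covering lemma):
if `A ⊆ G` is finite and nonempty with `|A + A| ≤ K·|A|` for some real `K ≥ 1`,
then there are finite sets `H, X ⊆ G` and a point `a₀ ∈ A` such that
`|H| ≤ K²·|A|`, `H = -H`, `H + H ⊆ H + X` with `|X| ≤ K⁵`
(so `H` is a `K⁵`-approximate group), and `A - a₀ ⊆ H`. -/
theorem cover_approximate_group {G : Type*} [AddCommGroup G] [DecidableEq G]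
    (A : Finset G) (hA : A.Nonempty) (K : ℝ) (hK : 1 ≤ K)
    (hdoub : ((A + A).card : ℝ) ≤ K * (A.card : ℝ)) :
    ∃ (H X : Finset G) (a₀ : G), a₀ ∈ A ∧
      (H.card : ℝ) ≤ K ^ 2 * (A.card : ℝ) ∧
      H = -H ∧
      H + H ⊆ H + X ∧
      (X.card : ℝ) ≤ K ^ 5 ∧
      (∀ a ∈ A, a - a₀ ∈ H) := by
  obtain ⟨a₀, ha₀⟩ := hA
  set H : Finset G := A - A with hH
  -- cardinality bound on H
  have hcard : (H.card : ℝ) ≤ K ^ 2 * (A.card : ℝ) := by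
    have := pr_bound A ⟨a₀, ha₀⟩ K hK hdoub 1 1
    simpa [one_nsmul] using this
  -- covering bound
  have hcov : (((H + H) + A).card : ℝ) ≤ K ^ 5 * (A.card : ℝ) := by
    have := pr_bound A ⟨a₀, ha₀⟩ K hK hdoub 3 2
    rw [hH, cover_aux A]
    exact_mod_cast this
  obtain ⟨F, hFsub, hFcard, hFcov⟩ := Finset.ruzsa_covering_add ⟨a₀, ha₀⟩ hcov
  refine ⟨H, F, a₀, ha₀, hcard, ?_, ?_, hFcard, ?_⟩
  · rw [hH, neg_sub]
  · intro x hx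
    have := hFcov hx
    rwa [add_comm F H] at this
  · intro a ha
    exact Finset.sub_mem_sub ha ha₀
end

section
/- Let G be an abelian group, A ⊆ G a finite nonempty set, and K ≥ 1 a real number. If E(A) ≥ |A|³/K, then the set of popular sums C = {x ∈ G : r_{A,A}(x) ≥ |A|/(2K)} satisfies |C| ≥ |A|/(2K). -/
/-!
Write `E(A) = ∑ₓ r(x)²` over `x ∈ A + A` and split the sum at the threshold `t = |A|/(2K)`.
Since `r(x) ≤ |A|`, each popular sum contributes at most `|A|²`; the others contribute at most
`t · ∑ₓ r(x) = t |A|² = |A|³/(2K)`. Hence the popular sums carry at least half of the energy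
`|A|³/K`, which forces at least `|A|/(2K)` of them.
-/

open scoped Pointwise

/-- The representation function `r_{A,B}(x)`: the number of pairs
`(a, b) ∈ A × B` with `a + b = x`. -/
def repFn {G : Type*} [AddCommGroup G] [DecidableEq G] (A B : Finset G) (x : G) : ℕ :=
  ((A ×ˢ B).filter fun ab => ab.1 + ab.2 = x).card

/-- The additive energy `E(A,B)`: the number of quadruples
`(a₁, a₂, b₁, b₂) ∈ A × A × B × B` with `a₁ + b₁ = a₂ + b₂`. -/
def addEnergy {G : Type*} [AddCommGroup G] [DecidableEq G] (A B : Finset G) : ℕ :=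
  (((A ×ˢ A) ×ˢ B ×ˢ B).filter fun x => x.1.1 + x.2.1 = x.1.2 + x.2.2).card

open scoped Finset

namespace Finset

theorem sum_sq_le_card_filter_mul_sq_add_mul_sum {ι : Type*} (s : Finset ι) (f : ι → ℝ)
    {M : ℝ} (hf₀ : ∀ i ∈ s, 0 ≤ f i) (hfM : ∀ i ∈ s, f i ≤ M) {t : ℝ} (ht : 0 ≤ t) :
    ∑ i ∈ s, f i ^ 2 ≤ #{i ∈ s | t ≤ f i} * M ^ 2 + t * ∑ i ∈ s, f i := by
  rw [← sum_filter_add_sum_filter_not s (fun i => t ≤ f i)]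
  gcongr ?_ + ?_
  · rw [← nsmul_eq_mul]
    refine sum_le_card_nsmul _ _ _ fun i hi => ?_
    rw [mem_filter] at hi
    exact pow_le_pow_left₀ (hf₀ i hi.1) (hfM i hi.1) 2
  · calc ∑ i ∈ s with ¬t ≤ f i, f i ^ 2 ≤ ∑ i ∈ s with ¬t ≤ f i, t * f i := by
          refine sum_le_sum fun i hi => ?_
          rw [mem_filter, not_le] at hi
          rw [sq]
          exact mul_le_mul_of_nonneg_right hi.2.le (hf₀ i hi.1)
      _ ≤ t * ∑ i ∈ s, f i := by
          rw [← mul_sum]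
          exact mul_le_mul_of_nonneg_left (sum_le_sum_of_subset_of_nonneg (filter_subset _ s)
            fun i hi _ => hf₀ i hi) ht

end Finset

section RepFn

variable {G : Type*} [AddCommGroup G] [DecidableEq G] (A B : Finset G)

theorem repFn_le_card_left (x : G) : repFn A B x ≤ #A :=
  Finset.card_le_card_of_injOn Prod.fst
    (fun _ hp => (Finset.mem_product.1 (Finset.mem_filter.1 hp).1).1)
    fun _ hp _ hq hpq => Prod.ext hpq <| add_left_cancel <| by
      rw [Finset.mem_coe, Finset.mem_filter] at hp hq
      rw [hp.2, hpq, hq.2]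

theorem sum_repFn : ∑ x ∈ A + B, repFn A B x = #A * #B :=
  (Finset.card_eq_sum_card_fiberwise fun _ hp => Finset.add_mem_add
    (Finset.mem_product.1 hp).1 (Finset.mem_product.1 hp).2).symm.trans (Finset.card_product A B)

theorem addEnergy_eq_sum_sq_repFn : addEnergy A B = ∑ x ∈ A + B, repFn A B x ^ 2 :=
  Finset.addEnergy_eq_sum_sq' A B

theorem addEnergy_le_card_filter_mul_sq_add {t : ℝ} (ht : 0 ≤ t) :
    (addEnergy A B : ℝ) ≤ #{x ∈ A + B | t ≤ (repFn A B x : ℝ)} * (#A : ℝ) ^ 2 + t * (#A * #B) := by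
  have hsum : ∑ x ∈ A + B, (repFn A B x : ℝ) = #A * #B := mod_cast sum_repFn A B
  rw [addEnergy_eq_sum_sq_repFn, ← hsum]
  push_cast
  exact Finset.sum_sq_le_card_filter_mul_sq_add_mul_sum _ _ (fun _ _ => Nat.cast_nonneg _)
    (fun x _ => mod_cast repFn_le_card_left A B x) ht

end RepFn

/-- If `E(A) ≥ |A|³/K` for a nonempty finite `A ⊆ G` and real `K ≥ 1`, then the
set of popular sums `C = {x : r_{A,A}(x) ≥ |A|/(2K)}` has size `|C| ≥ |A|/(2K)`.
(Since `|A|/(2K) > 0`, every popular sum lies in `A + A`, so `C` is the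
corresponding subset of the sumset.) -/
theorem popular_sums_card {G : Type*} [AddCommGroup G] [DecidableEq G]
    (A : Finset G) (hA : A.Nonempty) (K : ℝ) (hK : 1 ≤ K)
    (hE : (A.card : ℝ) ^ 3 / K ≤ (addEnergy A A : ℝ)) :
    (A.card : ℝ) / (2 * K) ≤
      (((A + A).filter fun x => (A.card : ℝ) / (2 * K) ≤ (repFn A A x : ℝ)).card : ℝ) := by
  have hn : (0 : ℝ) < (#A : ℝ) ^ 2 := by have := hA.card_pos; positivity
  have hE' := hE.trans (addEnergy_le_card_filter_mul_sq_add A A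
    (t := #A / (2 * K)) (by have : 0 < K := one_pos.trans_le hK; positivity))
  have energy_split :
      (#A : ℝ) ^ 3 / K = (#A : ℝ) ^ 2 * (#A / (2 * K)) + #A / (2 * K) * (#A * #A) := by
    ring
  refine le_of_mul_le_mul_left ?_ hn
  linarith
end

section
/- In the butterfly graph with alphabet size σ ≥ 1 and dimension d ≥ 1, for every integer 0 ≤ ℓ ≤ d, the number of ordered pairs (s, s′) of strings of length d over the alphabet such that the left-layer vertices (s, 1) and (s′, 1) are at graph distance at most 2d − 2ℓ is at most σ^{2d−ℓ}. Equivalently, for two independent uniformly random strings s, s′, the probability that (s, 1) and (s′, 1) have distance at most 2d − 2ℓ is at most σ^{−ℓ}. -/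
/-- The butterfly graph with alphabet size `σ` and dimension `d`: vertices are
pairs `(s, i)` of a string `s : Fin d → Fin σ` and a layer `i : Fin (d+1)`;
`(s, i)` and `(s', i+1)` are adjacent iff `s` and `s'` agree in all positions
except possibly position `i`. -/
def butterfly (σ d : ℕ) : SimpleGraph ((Fin d → Fin σ) × Fin (d + 1)) where
  Adj u v :=
    ∃ i : Fin d, ((u.2 = i.castSucc ∧ v.2 = i.succ) ∨ (v.2 = i.castSucc ∧ u.2 = i.succ)) ∧
      ∀ j : Fin d, j ≠ i → u.1 j = v.1 j
  symm := by
    refine ⟨?_⟩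
    rintro u v ⟨i, hlay, hstr⟩
    exact ⟨i, by tauto, fun j hj => (hstr j hj).symm⟩
  loopless := by
    refine ⟨?_⟩
    rintro u ⟨i, (⟨h1, h2⟩ | ⟨h1, h2⟩), -⟩ <;>
      · rw [h1] at h2
        exact absurd h2 (Fin.castSucc_lt_succ (i := i)).ne

/-!
A walk from the left layer that changes position `j` of the string must cross the edge between
layers `j` and `j + 1`, so a walk between two left-layer vertices whose strings differ at
position `j` (counted from `0`) has length at least `2 (j + 1)`. Since the butterfly graph is
connected, two left-layer vertices at distance at most `2d - 2ℓ` therefore carry strings that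
agree on their last `ℓ` positions, which leaves `σ ^ d * σ ^ (d - ℓ)` possible pairs.
-/

namespace butterfly

variable {σ d : ℕ}

lemma exists_val_of_adj {u v : (Fin d → Fin σ) × Fin (d + 1)} (h : (butterfly σ d).Adj u v) :
    ∃ i : Fin d, ((u.2 : ℕ) = i ∧ (v.2 : ℕ) = i + 1 ∨ (v.2 : ℕ) = i ∧ (u.2 : ℕ) = i + 1) ∧
      ∀ j, j ≠ i → u.1 j = v.1 j := by
  obtain ⟨i, hlay | hlay, hagree⟩ := h
  · exact ⟨i, .inl ⟨by simp [hlay.1], by simp [hlay.2]⟩, hagree⟩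
  · exact ⟨i, .inr ⟨by simp [hlay.1], by simp [hlay.2]⟩, hagree⟩

lemma layer_le_add_length {u v : (Fin d → Fin σ) × Fin (d + 1)}
    (w : (butterfly σ d).Walk u v) : (u.2 : ℕ) ≤ v.2 + w.length := by
  induction w with
  | nil => simp
  | cons h _ ih =>
    obtain ⟨i, hlay, -⟩ := exists_val_of_adj h
    rw [SimpleGraph.Walk.length_cons]
    omega

/-- Position `j` can only change on an edge between layers `j` and `j + 1`. -/
lemma le_length_of_apply_ne {u v : (Fin d → Fin σ) × Fin (d + 1)}
    (w : (butterfly σ d).Walk u v) {j : Fin d} (h : u.1 j ≠ v.1 j) :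
    ((j : ℕ) + 1 - u.2) + ((j : ℕ) + 1 - v.2) ≤ w.length := by
  induction w with
  | nil => exact absurd rfl h
  | cons hab p ih =>
    obtain ⟨i, hlay, hagree⟩ := exists_val_of_adj hab
    rw [SimpleGraph.Walk.length_cons]
    by_cases hji : j = i
    · subst hji
      have := layer_le_add_length p
      omega
    · have := ih (hagree j hji ▸ h)
      omega

lemma adj_castSucc_succ {s s' : Fin d → Fin σ} {i : Fin d} (h : ∀ j, j ≠ i → s j = s' j) :
    (butterfly σ d).Adj (s, i.castSucc) (s', i.succ) :=
  ⟨i, .inl ⟨rfl, rfl⟩, h⟩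

lemma reachable_replace_prefix (s s' : Fin d → Fin σ) (k : Fin (d + 1)) :
    (butterfly σ d).Reachable (s, 0) (fun j => if j.castSucc < k then s' j else s j, k) := by
  induction k using Fin.induction with
  | zero => simp
  | succ i ih =>
    refine ih.trans (adj_castSucc_succ fun j hj => ?_).reachable
    rcases lt_or_gt_of_ne hj with hlt | hgt
    · simp [hlt, hlt.le]
    · simp [not_lt.2 hgt.le, not_le.2 hgt]

lemma reachable_layer_zero (s : Fin d → Fin σ) (k : Fin (d + 1)) :
    (butterfly σ d).Reachable (s, 0) (s, k) := by
  simpa using reachable_replace_prefix s s k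

lemma preconnected : (butterfly σ d).Preconnected := by
  rintro ⟨s, i⟩ ⟨s', i'⟩
  have hs : (butterfly σ d).Reachable (s, 0) (s', 0) := by
    have hlast := reachable_replace_prefix s s' (Fin.last d)
    simp only [Fin.castSucc_lt_last, if_true] at hlast
    exact hlast.trans (reachable_layer_zero s' _).symm
  exact (reachable_layer_zero s i).symm.trans (hs.trans (reachable_layer_zero s' i'))

lemma le_dist_of_apply_ne {s s' : Fin d → Fin σ} {j : Fin d} (h : s j ≠ s' j)
    (i i' : Fin (d + 1)) :
    ((j : ℕ) + 1 - i) + ((j : ℕ) + 1 - i') ≤ (butterfly σ d).dist (s, i) (s', i') := by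
  obtain ⟨w, hw⟩ := (preconnected (s, i) (s', i')).exists_walk_length_eq_dist
  exact hw ▸ le_length_of_apply_ne w h

lemma apply_eq_of_dist_le {s s' : Fin d → Fin σ} {ℓ : ℕ}
    (h : (butterfly σ d).dist (s, 0) (s', 0) ≤ 2 * d - 2 * ℓ) {j : Fin d} (hj : d - ℓ ≤ j) :
    s j = s' j := by
  by_contra hne
  have := le_dist_of_apply_ne hne 0 0
  simp only [Fin.val_zero, Nat.sub_zero] at this
  omega

end butterfly

lemma card_pairs_agree_from_le {α : Type*} [Finite α] {d m : ℕ} (hm : m ≤ d) :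
    Nat.card {ss : (Fin d → α) × (Fin d → α) // ∀ j : Fin d, m ≤ (j : ℕ) → ss.1 j = ss.2 j}
      ≤ Nat.card α ^ (d + m) := by
  let restrict : {ss : (Fin d → α) × (Fin d → α) // ∀ j : Fin d, m ≤ (j : ℕ) → ss.1 j = ss.2 j} →
      (Fin d → α) × (Fin m → α) :=
    fun ss => (ss.1.1, fun j => ss.1.2 (Fin.castLE hm j))
  have hinj : Function.Injective restrict := by
    rintro ⟨⟨s, s'⟩, hs⟩ ⟨⟨t, t'⟩, ht⟩ heq
    obtain ⟨rfl, hpre⟩ := Prod.mk.inj heq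
    refine Subtype.ext (Prod.ext rfl (funext fun j => ?_))
    rcases lt_or_ge (j : ℕ) m with hlt | hge
    · exact congrFun hpre ⟨j, hlt⟩
    · exact (hs j hge).symm.trans (ht j hge)
  calc _ ≤ Nat.card ((Fin d → α) × (Fin m → α)) := Nat.card_le_card_of_injective _ hinj
    _ = Nat.card α ^ (d + m) := by simp [Nat.card_fun, pow_add]

theorem butterfly_close_pairs_card_general (σ d : ℕ)
    (ℓ : ℕ) (hℓ : ℓ ≤ d) :
    Nat.card {ss : (Fin d → Fin σ) × (Fin d → Fin σ) //
        (butterfly σ d).dist (ss.1, 0) (ss.2, 0) ≤ 2 * d - 2 * ℓ}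
      ≤ σ ^ (2 * d - ℓ) := by
  have hclose : ∀ ss : (Fin d → Fin σ) × (Fin d → Fin σ),
      (butterfly σ d).dist (ss.1, 0) (ss.2, 0) ≤ 2 * d - 2 * ℓ →
        ∀ j : Fin d, d - ℓ ≤ (j : ℕ) → ss.1 j = ss.2 j :=
    fun _ h _ hj => butterfly.apply_eq_of_dist_le h hj
  calc _ ≤ _ := Nat.card_le_card_of_injective _ (Subtype.impEmbedding _ _ hclose).injective
    _ ≤ Nat.card (Fin σ) ^ (d + (d - ℓ)) := card_pairs_agree_from_le (Nat.sub_le d ℓ)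
    _ = σ ^ (2 * d - ℓ) := by rw [Nat.card_fin]; congr 1; omega

/-- For every `0 ≤ ℓ ≤ d`, the number of ordered pairs `(s, s')` of strings
whose left-layer vertices `(s, 1)`, `(s', 1)` are at distance at most
`2d - 2ℓ` in the butterfly graph is at most `σ^{2d - ℓ}`; equivalently, two
uniformly random strings are at distance at most `2d - 2ℓ` with probability
at most `σ^{-ℓ}`. -/
theorem butterfly_close_pairs_card (σ d : ℕ) (hσ : 1 ≤ σ) (hd : 1 ≤ d)
    (ℓ : ℕ) (hℓ : ℓ ≤ d) :
    Nat.card {ss : (Fin d → Fin σ) × (Fin d → Fin σ) //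
        (butterfly σ d).dist (ss.1, 0) (ss.2, 0) ≤ 2 * d - 2 * ℓ}
      ≤ σ ^ (2 * d - ℓ) :=
  butterfly_close_pairs_card_general σ d ℓ hℓ
end

section
/- Let G = (V, E) be a simple undirected graph and let Ĝ be the graph on vertex set V × {1,2,3,4} whose edges are: {(x,i), (y,i+1)} for every edge {x,y} ∈ E and every i ∈ {1,2,3}, together with the matching edges {(x,1), (x,4)} for every x ∈ V. Then for all x, y, z ∈ V, the three pairs {x,y}, {y,z}, {x,z} are all edges of G (i.e., (x,y,z) is a triangle in G) if and only if the four vertices (x,1), (y,2), (z,3), (x,4) form a 4-cycle in Ĝ, i.e., {(x,1),(y,2)}, {(y,2),(z,3)}, {(z,3),(x,4)}, and {(x,4),(x,1)} are all edges of Ĝ. -/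
/-- The graph `Ĝ` on vertex set `V × {1,2,3,4}` (here `Fin 4 = {0,1,2,3}`):
for every edge `{x,y}` of `G` and every `i ∈ {1,2,3}` there is an edge
`{(x,i), (y,i+1)}`, and additionally there are the matching edges
`{(x,1), (x,4)}` for every `x ∈ V`. -/
def hatGraph {V : Type*} (G : SimpleGraph V) : SimpleGraph (V × Fin 4) where
  Adj u v :=
    (G.Adj u.1 v.1 ∧
      ((u.2 = 0 ∧ v.2 = 1) ∨ (u.2 = 1 ∧ v.2 = 2) ∨ (u.2 = 2 ∧ v.2 = 3) ∨
       (v.2 = 0 ∧ u.2 = 1) ∨ (v.2 = 1 ∧ u.2 = 2) ∨ (v.2 = 2 ∧ u.2 = 3))) ∨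
    (u.1 = v.1 ∧ ((u.2 = 0 ∧ v.2 = 3) ∨ (u.2 = 3 ∧ v.2 = 0)))
  symm := by
    constructor
    rintro u v (⟨hadj, h⟩ | ⟨heq, h⟩)
    · exact Or.inl ⟨hadj.symm, by tauto⟩
    · exact Or.inr ⟨heq.symm, by tauto⟩
  loopless := by
    constructor
    rintro u (⟨hadj, -⟩ | ⟨-, (⟨h0, h3⟩ | ⟨h0, h3⟩)⟩)
    · exact G.irrefl hadj
    all_goals rw [h0] at h3; exact absurd h3 (by decide)

namespace hatGraph

variable {V : Type*} (G : SimpleGraph V)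

theorem adj_of_val_eq_succ {u v : V} {i j : Fin 4} (hij : j.val = i.val + 1) :
    (hatGraph G).Adj (u, i) (v, j) ↔ G.Adj u v := by
  fin_cases i <;> fin_cases j <;> simp_all [hatGraph]

theorem adj_three_zero {u v : V} : (hatGraph G).Adj (u, 3) (v, 0) ↔ u = v := by
  simp [hatGraph]

end hatGraph

/-- `(x, y, z)` is a triangle in `G` iff the vertices `(x,1), (y,2), (z,3),
(x,4)` form a 4-cycle in `Ĝ`, i.e. all four consecutive pairs are edges. -/
theorem triangle_iff_fourCycle {V : Type*} (G : SimpleGraph V) (x y z : V) :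
    (G.Adj x y ∧ G.Adj y z ∧ G.Adj x z) ↔
      ((hatGraph G).Adj (x, 0) (y, 1) ∧ (hatGraph G).Adj (y, 1) (z, 2) ∧
        (hatGraph G).Adj (z, 2) (x, 3) ∧ (hatGraph G).Adj (x, 3) (x, 0)) := by
  rw [hatGraph.adj_of_val_eq_succ G rfl, hatGraph.adj_of_val_eq_succ G rfl,
    hatGraph.adj_of_val_eq_succ G rfl, hatGraph.adj_three_zero, G.adj_comm z x, eq_self, and_true]
end

section
/- Let G = (V, E) be a simple undirected graph and let Ĝ be the graph on vertex set V × {1,2,3,4} whose edges are: {(x,i), (y,i+1)} for every edge {x,y} ∈ E and every i ∈ {1,2,3}, together with the matching edges {(x,1), (x,4)} for every x ∈ V. Then every 4-cycle of Ĝ that contains a matching edge {(x,1),(x,4)} is of the form (x,1), (y,2), (z,3), (x,4) for some y, z ∈ V such that {x,y}, {y,z}, {z,x} ∈ E; in particular, (x, y, z) is a triangle in G. -/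
/-! A neighbour of `(x,1)` other than `(x,4)` lies in layer 2 and a neighbour of `(x,4)` other
than `(x,1)` lies in layer 3, so the remaining edge of the cycle joins layers 2 and 3 and is
the lift of an edge of `G`. -/

section

variable {V : Type*} (G : SimpleGraph V)

theorem hatGraph_adj_zero_iff (x y : V) (i : Fin 4) :
    (hatGraph G).Adj (x, 0) (y, i) ↔ i = 1 ∧ G.Adj x y ∨ i = 3 ∧ x = y := by
  fin_cases i <;> simp [hatGraph, and_comm]

theorem hatGraph_adj_three_iff (x y : V) (i : Fin 4) :
    (hatGraph G).Adj (x, 3) (y, i) ↔ i = 2 ∧ G.Adj x y ∨ i = 0 ∧ x = y := by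
  fin_cases i <;> simp [hatGraph, and_comm]

theorem hatGraph_adj_one_two_iff (y z : V) : (hatGraph G).Adj (y, 1) (z, 2) ↔ G.Adj y z := by
  simp [hatGraph]

end

theorem fourCycle_matching_edge_gives_triangle_general {V : Type*} (G : SimpleGraph V)
    (x : V) (u v : V × Fin 4)
    (hd2 : (x, (0 : Fin 4)) ≠ v) (hd4 : u ≠ (x, (3 : Fin 4)))
    (h1 : (hatGraph G).Adj (x, 0) u) (h2 : (hatGraph G).Adj u v)
    (h3 : (hatGraph G).Adj v (x, 3)) :
    ∃ y z : V, u = (y, 1) ∧ v = (z, 2) ∧ G.Adj x y ∧ G.Adj y z ∧ G.Adj z x := by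
  obtain ⟨y, i⟩ := u
  obtain ⟨z, j⟩ := v
  rw [hatGraph_adj_zero_iff] at h1
  rw [(hatGraph G).adj_comm, hatGraph_adj_three_iff] at h3
  obtain ⟨rfl, hxy⟩ := h1.resolve_right (by rintro ⟨rfl, rfl⟩; exact hd4 rfl)
  obtain ⟨rfl, hxz⟩ := h3.resolve_right (by rintro ⟨rfl, rfl⟩; exact hd2 rfl)
  exact ⟨y, z, rfl, rfl, hxy, (hatGraph_adj_one_two_iff G y z).1 h2, hxz.symm⟩

/-- Every 4-cycle of `Ĝ` through a matching edge `{(x,1), (x,4)}` comes from a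
triangle of `G`: if `(x,1), u, v, (x,4)` are pairwise distinct and consecutive
pairs (as well as `{(x,4), (x,1)}`) are edges of `Ĝ`, then `u = (y,2)` and
`v = (z,3)` for some `y, z ∈ V` with `{x,y}, {y,z}, {z,x}` edges of `G`,
i.e. `(x, y, z)` is a triangle in `G`. -/
theorem fourCycle_matching_edge_gives_triangle {V : Type*} (G : SimpleGraph V)
    (x : V) (u v : V × Fin 4)
    (hd1 : (x, (0 : Fin 4)) ≠ u) (hd2 : (x, (0 : Fin 4)) ≠ v)
    (hd3 : u ≠ v) (hd4 : u ≠ (x, (3 : Fin 4))) (hd5 : v ≠ (x, (3 : Fin 4)))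
    (h1 : (hatGraph G).Adj (x, 0) u) (h2 : (hatGraph G).Adj u v)
    (h3 : (hatGraph G).Adj v (x, 3)) :
    ∃ y z : V, u = (y, 1) ∧ v = (z, 2) ∧ G.Adj x y ∧ G.Adj y z ∧ G.Adj z x :=
  fourCycle_matching_edge_gives_triangle_general G x u v hd2 hd4 h1 h2 h3
end
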